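/- Let m be a positive integer, G a graph, W = (T, (W_x | x ∈ V(T))) a tree decomposition of G with T rooted, and X a set of m vertices of T. Then Z = ⋃_{x ∈ LCA(T,X)} W_x is the union of at most 2m − 1 bags of W, and for every component C of G − Z, the set N_G(V(C)) is contained in the union of at most two bags of W. Moreover, if W is natural, then N_G(V(C)) intersects at most two components of G − V(C). -/

import Mathlib

open SimpleGraph

section Defs

variable {V : Type*} {ι : Type*} {α : Type*}

/-- `G` has no `K_t`-minor: there is no family of `t` pairwise disjoint nonempty connected
vertex sets with an edge of `G` between any two of them. -/
def CliqueMinorFree (G : SimpleGraph V) (t : ℕ) : Prop :=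
  ¬ ∃ B : Fin t → Set V,
      (∀ i, (G.induce (B i)).Connected) ∧
      (∀ i j, i ≠ j → Disjoint (B i) (B j)) ∧
      (∀ i j, i ≠ j → ∃ u ∈ B i, ∃ w ∈ B j, G.Adj u w)

/-- `(T, W)` is a tree decomposition of `G`. -/
structure IsTreeDecomp (G : SimpleGraph V) (T : SimpleGraph ι) (W : ι → Set V) : Prop where
  isTree : T.IsTree
  bagsConnected : ∀ u : V, (T.induce {x : ι | u ∈ W x}).Connected
  edgeInBag : ∀ ⦃u w : V⦄, G.Adj u w → ∃ x, u ∈ W x ∧ w ∈ W x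

/-- The tree decomposition with bags `W` has width at most `w`. -/
def TDWidthLE (W : ι → Set V) (w : ℕ) : Prop := ∀ x, (W x).ncard ≤ w + 1

/-- `φ` is a `p`-centered coloring of `G`: every nonempty connected subgraph on which `φ`
uses at most `p` colors has a vertex of unique color. -/
def IsCenteredColoring (p : ℕ) (G : SimpleGraph V) (φ : V → α) : Prop :=
  ∀ H : G.Subgraph, H.Connected →
    p < (φ '' H.verts).ncard ∨ ∃ u ∈ H.verts, ∀ w ∈ H.verts, w ≠ u → φ w ≠ φ u

/-- The `p`-centered chromatic number of `G`. -/
noncomputable def centeredChromaticNumber (p : ℕ) (G : SimpleGraph V) : ℕ :=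
  sInf {k | ∃ φ : V → Fin k, IsCenteredColoring p G φ}

/-- `φ` is a `p`-centered coloring of `(G, σ)`: on every nonempty connected subgraph either
more than `p` colors are used, or the `σ`-minimal vertex has a unique color. -/
def IsOrderedCenteredColoring (p : ℕ) (G : SimpleGraph V) (σ : V → ℕ) (φ : V → α) : Prop :=
  ∀ H : G.Subgraph, H.Connected →
    p < (φ '' H.verts).ncard ∨
      ∃ u ∈ H.verts, (∀ w ∈ H.verts, σ u ≤ σ w) ∧ ∀ w ∈ H.verts, w ≠ u → φ w ≠ φ u

/-- The `p`-centered chromatic number of `(G, σ)`. -/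
noncomputable def orderedCenteredChromaticNumber (p : ℕ) (G : SimpleGraph V) (σ : V → ℕ) : ℕ :=
  sInf {k | ∃ φ : V → Fin k, IsOrderedCenteredColoring p G σ φ}

/-- `σ` (an injection into `ℕ`, representing a linear ordering of the vertices) is an
elimination ordering of the tree decomposition with bags `W`. -/
def IsEliminationOrdering (W : ι → Set V) (σ : V → ℕ) : Prop :=
  Function.Injective σ ∧
    ∀ u : V, ∃ x : ι, ∀ w : V, (∃ z, u ∈ W z ∧ w ∈ W z) → σ w < σ u → w ∈ W x

/-- `Pa` is a partition of the vertex set into nonempty parts. -/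
def IsVertexPartition (Pa : Set (Set V)) : Prop :=
  (∀ P ∈ Pa, P.Nonempty) ∧ ∀ u : V, ∃! P, P ∈ Pa ∧ u ∈ P

/-- The quotient graph `G/Pa`. -/
def quotientGraph (G : SimpleGraph V) (Pa : Set (Set V)) : SimpleGraph Pa where
  Adj P Q := P ≠ Q ∧ ∃ u ∈ (P : Set V), ∃ w ∈ (Q : Set V), G.Adj u w
  symm := by
    constructor
    rintro P Q ⟨hPQ, u, hu, w, hw, hadj⟩
    exact ⟨hPQ.symm, w, hw, u, hu, hadj.symm⟩
  loopless := by constructor; rintro P ⟨h, -⟩; exact h rfl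

/-- The neighborhood of a set of vertices. -/
def nbhdSet (G : SimpleGraph V) (S : Set V) : Set V :=
  {w | w ∉ S ∧ ∃ u ∈ S, G.Adj u w}

/-- `C` is (the vertex set of) a connected component of `G - Z`. -/
def IsCompOfDel (G : SimpleGraph V) (Z C : Set V) : Prop :=
  Disjoint C Z ∧ (G.induce C).Connected ∧
    ∀ u ∈ C, ∀ w, G.Adj u w → w ∉ Z → w ∈ C

/-- The neighborhood of a set of vertices in a subgraph. -/
def subNbhdSet {G : SimpleGraph V} (G₀ : G.Subgraph) (S : Set V) : Set V :=
  {w | w ∉ S ∧ ∃ u ∈ S, G₀.Adj u w}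

/-- `C` is (the vertex set of) a connected component of `G₀ - Z`, for a subgraph `G₀`. -/
def IsCompOfSubDel {G : SimpleGraph V} (G₀ : G.Subgraph) (Z C : Set V) : Prop :=
  C ⊆ G₀.verts \ Z ∧ (G₀.induce C).Connected ∧
    ∀ u ∈ C, ∀ w ∈ G₀.verts \ Z, G₀.Adj u w → w ∈ C

/-- `φ` is a `(p,c)`-good coloring of `G`. -/
def IsGoodColoring (p c : ℕ) (G : SimpleGraph V) (φ : V → ℕ) : Prop :=
  ∀ G₀ : G.Subgraph, ∀ 𝓕 : Set G.Subgraph,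
    (∀ F ∈ 𝓕, F ≤ G₀ ∧ F.Connected) →
    ∀ d : ℕ, 0 < d →
      (¬ ∃ f : Fin (d + 1) → G.Subgraph,
          (∀ i, f i ∈ 𝓕) ∧ ∀ i j, i ≠ j → Disjoint (f i).verts (f j).verts) →
      ∃ Z : Set V, Z ⊆ G₀.verts ∧ ∃ ψ : V → ℕ,
        (∀ u ∈ Z, 1 ≤ ψ u ∧ ψ u ≤ c * d) ∧
        (∀ F ∈ 𝓕, (F.verts ∩ Z).Nonempty) ∧
        (∀ H : G.Subgraph, H ≤ G₀ → H.Connected → (H.verts ∩ Z).Nonempty →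
          p < (φ '' H.verts).ncard ∨
            ∃ u ∈ H.verts ∩ Z, ∀ w ∈ H.verts ∩ Z, w ≠ u → (φ w, ψ w) ≠ (φ u, ψ u)) ∧
        (∀ C : Set V, IsCompOfSubDel G₀ Z C →
          ∃ D₁ D₂ : Set V, ∀ D, IsCompOfSubDel G₀ C D →
            (subNbhdSet G₀ C ∩ D).Nonempty → D = D₁ ∨ D = D₂)

/-- Adjacency in the torso of `W` in `G`: two distinct vertices of `W` joined by a
walk of `G` all of whose internal vertices avoid `W`. -/
def TorsoAdj (G : SimpleGraph V) (W : Set V) (u w : V) : Prop :=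
  u ∈ W ∧ w ∈ W ∧ u ≠ w ∧
    ∃ q : G.Walk u w, ∀ x ∈ q.support, x ∈ W → x = u ∨ x = w

/-- The torso of `W` in `G`. -/
def torso (G : SimpleGraph V) (W : Set V) : SimpleGraph W where
  Adj u w := TorsoAdj G W ↑u ↑w
  symm := by
    constructor
    intro u w h
    obtain ⟨hu, hw, hne, q, hq⟩ := h
    exact ⟨hw, hu, hne.symm, q.reverse, fun x hx hxW => by
      rw [Walk.support_reverse, List.mem_reverse] at hx
      exact (hq x hx hxW).symm⟩
  loopless := by
    constructor
    intro u h
    exact h.2.2.1 rfl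

/-- In the tree `T` rooted at `r`, the vertex `u` is an ancestor of `w`
(i.e. `u` lies on every walk from the root to `w`). -/
def IsAncestor (T : SimpleGraph α) (r u w : α) : Prop :=
  ∀ q : T.Walk r w, u ∈ q.support

/-- `x` is the lowest common ancestor of `u` and `w` in the tree `T` rooted at `r`. -/
def IsLCA (T : SimpleGraph α) (r x u w : α) : Prop :=
  IsAncestor T r x u ∧ IsAncestor T r x w ∧
    ∀ y, IsAncestor T r y u → IsAncestor T r y w → IsAncestor T r y x

/-- The lowest common ancestor closure of `Y` in the tree `T` rooted at `r`. -/
def lcaClosure (T : SimpleGraph α) (r : α) (Y : Set α) : Set α :=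
  {x | ∃ u ∈ Y, ∃ w ∈ Y, IsLCA T r x u w}

/-- The vertex set of `T_{x|y}`: the component of `x` in `T` minus the edge `xy`.
(For adjacent `x y` in a tree these are the vertices `z` such that
the path from `z` to `y` passes through `x`.) -/
def sideVerts (T : SimpleGraph α) (x y : α) : Set α :=
  {z | ∀ q : T.Walk z y, x ∈ q.support}

/-- The tree decomposition `(T, W)` of `G` is natural. -/
def IsNaturalTD (G : SimpleGraph V) (T : SimpleGraph ι) (W : ι → Set V) : Prop :=
  ∀ x y, T.Adj x y → (G.induce (⋃ z ∈ sideVerts T x y, W z)).Connected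

end Defs

/-!
Adding a vertex `a` to `X` adds at most two vertices to the LCA closure: `a` itself and the
deepest of the vertices `lca(a, u)`, `u ∈ X`; every other `lca(a, u)` is the lca of `u` and
the vertex `u'` realising the deepest one. Hence `|LCA(X)| ≤ 2|X| - 1`.

Let `C` be a component of `G - Z`. The bags meeting `C` form a subtree avoiding `LCA(X)`, so
they lie in one component `K` of `T - LCA(X)`, and every neighbour of `C` lies in the bag of a
vertex of `LCA(X)` adjacent to `K`. Root `T` at `r`; a vertex outside `K` that is an ancestor of
one vertex of `K` is an ancestor of all of them. Hence at most one edge leaves `K` upwards. Two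
edges leaving `K` downwards into `t ≠ t'` are impossible: `lca(t, t')` belongs to `LCA(X)` and
lies on the `t`–`t'` path, whose inner vertices are in `K`, so it is `t` or `t'`; then one of
them is an ancestor of the other, hence of all of `K`, including its own parent. If the
decomposition is natural, the bags beyond each of these (at most) two edges induce a connected
subgraph avoiding `C`, and every component of `G - V(C)` meeting `N(C)` contains one of them.
-/

theorem SimpleGraph.Walk.IsPath.append {V : Type*} {G : SimpleGraph V} {u v w : V}
    {p : G.Walk u v} {q : G.Walk v w} (hp : p.IsPath) (hq : q.IsPath)
    (h : ∀ x ∈ p.support, x ∈ q.support → x = v) : (p.append q).IsPath := by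
  have hq' := hq.support_nodup
  rw [← q.cons_tail_support, List.nodup_cons] at hq'
  rw [Walk.isPath_def, Walk.support_append, List.nodup_append]
  refine ⟨hp.support_nodup, hq'.2, fun x hx y hy hxy => ?_⟩
  subst hxy
  have hxq : x ∈ q.support := q.cons_tail_support ▸ List.mem_cons_of_mem _ hy
  exact hq'.1 (h x hx hxq ▸ hy)

theorem SimpleGraph.Walk.IsPath.eq_of_mem_takeUntil_of_mem_dropUntil {V : Type*}
    [DecidableEq V] {G : SimpleGraph V} {u v x y : V} {p : G.Walk u v} (hp : p.IsPath)
    (hx : x ∈ p.support) (hy : y ∈ (p.takeUntil x hx).support)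
    (hy' : y ∈ (p.dropUntil x hx).support) : y = x := by
  by_contra hne
  exact ((p.take_spec hx).symm ▸ hp).ne_of_mem_support_of_append hne hy hy' rfl

theorem Set.Subsingleton.exists_subset_singleton {β : Type*} [Nonempty β] {s : Set β}
    (hs : s.Subsingleton) : ∃ a, s ⊆ {a} := by
  rcases hs.eq_empty_or_singleton with rfl | ⟨a, rfl⟩
  exacts [⟨Classical.arbitrary β, Set.empty_subset _⟩, ⟨a, subset_rfl⟩]

theorem SimpleGraph.Preconnected.exists_walk_support_subset {V : Type*} {G : SimpleGraph V}
    {s : Set V} {u v : V} (h : (G.induce s).Preconnected) (hu : u ∈ s) (hv : v ∈ s) :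
    ∃ p : G.Walk u v, ∀ x ∈ p.support, x ∈ s := by
  obtain ⟨p, hp⟩ := (Subgraph.preconnected_iff_forall_exists_walk_subgraph _).mp
    (preconnected_induce_iff.mp h) hu hv
  exact ⟨p, fun x hx => hp.1 (p.mem_verts_toSubgraph.mpr hx)⟩

section Ancestor

variable {α : Type*} {T : SimpleGraph α} {r a b c k t u x y z : α}

theorem isAncestor_comm : IsAncestor T a z b ↔ IsAncestor T b z a :=
  ⟨fun h q => by simpa using h q.reverse, fun h q => by simpa using h q.reverse⟩

theorem isAncestor_root (T : SimpleGraph α) (r y : α) : IsAncestor T r r y :=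
  fun q => q.start_mem_support

theorem isAncestor_self (T : SimpleGraph α) (r y : α) : IsAncestor T r y y :=
  fun q => q.end_mem_support

theorem IsAncestor.trans (hxy : IsAncestor T r x y) (hyz : IsAncestor T r y z) :
    IsAncestor T r x z :=
  fun q => by classical exact q.support_takeUntil_subset_support (hyz q) (hxy _)

theorem IsAncestor.isAncestor_or_isAncestor (h : IsAncestor T a z c) (b : α) :
    IsAncestor T a z b ∨ IsAncestor T b z c := by
  by_contra! hn
  obtain ⟨⟨p, hp⟩, q, hq⟩ :
      (∃ p : T.Walk a b, z ∉ p.support) ∧ ∃ q : T.Walk b c, z ∉ q.support := by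
    simpa only [IsAncestor, not_forall] using hn
  have := h (p.append q)
  rw [Walk.mem_support_append_iff] at this
  exact this.elim hp hq

theorem IsAncestor.eq_or_of_adj (h : IsAncestor T r z t) (hkt : T.Adj k t) :
    z = t ∨ IsAncestor T r z k := by
  by_contra! hn
  obtain ⟨hzt, q, hq⟩ : z ≠ t ∧ ∃ q : T.Walk r k, z ∉ q.support := by
    simpa only [IsAncestor, not_forall] using hn
  have := h (q.concat hkt)
  simp [Walk.support_concat, hq, hzt] at this

theorem IsAncestor.eq_or_eq_of_adj (h : IsAncestor T a z b) (hab : T.Adj a b) :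
    z = a ∨ z = b := by
  simpa using h hab.toWalk

theorem IsAncestor.antisymm (hr : T.Reachable r y) (hxy : IsAncestor T r x y)
    (hyx : IsAncestor T r y x) : x = y := by
  classical
  obtain ⟨q⟩ := hr
  by_contra hne
  exact Walk.notMem_support_takeUntil_support_takeUntil_subset hne q.end_mem_support
    (hxy _) (hyx _)

theorem IsAncestor.total (hT : T.Preconnected) (hy : IsAncestor T r y u)
    (hz : IsAncestor T r z u) : IsAncestor T r y z ∨ IsAncestor T r z y := by
  rcases hy.isAncestor_or_isAncestor z with h | h
  · exact .inl h
  rcases hz.isAncestor_or_isAncestor y with h' | h'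
  · exact .inr h'
  rw [isAncestor_comm] at h h'
  obtain rfl := h.antisymm (hT u z) h'
  exact .inl (isAncestor_self T r y)

theorem exists_mem_forall_isAncestor {L : Set α} (hL : L.Finite) (hne : L.Nonempty)
    (hchain : ∀ x ∈ L, ∀ y ∈ L, IsAncestor T r x y ∨ IsAncestor T r y x) :
    ∃ z₀ ∈ L, ∀ z ∈ L, IsAncestor T r z z₀ := by
  obtain ⟨z₀, hz₀L, hz₀⟩ := hL.exists_maximalFor (fun z => {y | IsAncestor T r y z}) L hne
  refine ⟨z₀, hz₀L, fun z hz => (hchain z hz z₀ hz₀L).elim id fun h => ?_⟩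
  exact hz₀ hz (fun y hy => hy.trans h) (isAncestor_self T r z)

end Ancestor

section LCA

variable {α : Type*} {T : SimpleGraph α} {r a b c g l u w w' x z : α}

theorem IsLCA.symm (h : IsLCA T r x u w) : IsLCA T r x w u :=
  ⟨h.2.1, h.1, fun y hu hw => h.2.2 y hw hu⟩

theorem IsLCA.eq_of_self (hT : T.Preconnected) (h : IsLCA T r x u u) : x = u :=
  h.1.antisymm (hT r u) (h.2.2 u (isAncestor_self T r u) (isAncestor_self T r u))

theorem exists_isLCA (hT : T.Preconnected) (r u w : α) : ∃ x, IsLCA T r x u w := by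
  obtain ⟨q⟩ := hT r u
  obtain ⟨x, ⟨hxu, hxw⟩, hx⟩ := exists_mem_forall_isAncestor (T := T) (r := r)
    (L := {y | IsAncestor T r y u ∧ IsAncestor T r y w})
    (q.support.finite_toSet.subset fun y hy => hy.1 q)
    ⟨r, isAncestor_root T r u, isAncestor_root T r w⟩ (fun x hx y hy => hx.1.total hT hy.1)
  exact ⟨x, hxu, hxw, fun y hyu hyw => hx y ⟨hyu, hyw⟩⟩

theorem IsLCA.isLCA_or_eq (hT : T.Preconnected) (hg : IsLCA T r g a b) (hl : IsLCA T r l g c) :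
    IsLCA T r l a c ∨ l = g := by
  by_cases H : ∀ y, IsAncestor T r y a → IsAncestor T r y c → IsAncestor T r y g
  · exact .inl ⟨hl.1.trans hg.1, hl.2.1, fun y hya hyc => hl.2.2 y (H y hya hyc) hyc⟩
  push Not at H
  obtain ⟨y, hya, hyc, hyg⟩ := H
  rcases hya.total hT hg.1 with hyg' | hgy
  · exact absurd hyg' hyg
  · exact .inr (hl.1.antisymm (hT r g) (hl.2.2 g (isAncestor_self T r g) (hgy.trans hyc)))

theorem IsLCA.isLCA_of_isAncestor (hT : T.Preconnected) (hx : IsLCA T r x a w)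
    (hz : IsLCA T r z a w') (hxz : IsAncestor T r x z) (hne : x ≠ z) : IsLCA T r x w w' := by
  refine ⟨hx.2.1, hxz.trans hz.2.1, fun y hyw hyw' => ?_⟩
  rcases hyw'.total hT hz.2.1 with hyz | hzy
  · exact hx.2.2 y (hyz.trans hz.1) hyw
  · exact absurd (hxz.antisymm (hT r z) (hx.2.2 z hz.1 (hzy.trans hyw))) hne

def IsLCAClosed (T : SimpleGraph α) (r : α) (S : Set α) : Prop :=
  ∀ u ∈ S, ∀ w ∈ S, ∀ x, IsLCA T r x u w → x ∈ S

theorem isLCAClosed_lcaClosure (hT : T.Preconnected) (X : Set α) :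
    IsLCAClosed T r (lcaClosure T r X) := by
  rintro _ ⟨u₁, hu₁, u₂, hu₂, h₁⟩ _ ⟨u₃, hu₃, u₄, hu₄, h₂⟩ x hx
  rcases h₁.isLCA_or_eq hT hx with hx' | rfl
  · rcases h₂.isLCA_or_eq hT hx'.symm with hx'' | rfl
    · exact ⟨u₃, hu₃, u₁, hu₁, hx''⟩
    · exact ⟨u₃, hu₃, u₄, hu₄, h₂⟩
  · exact ⟨u₁, hu₁, u₂, hu₂, h₁⟩

theorem lcaClosure_singleton_subset (hT : T.Preconnected) (a : α) : lcaClosure T r {a} ⊆ {a} := by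
  rintro x ⟨u, rfl, w, rfl, h⟩
  exact h.eq_of_self hT

theorem exists_lcaClosure_insert_subset [Finite α] (hT : T.Preconnected) (a : α) (s : Set α) :
    ∃ z₀, lcaClosure T r (insert a s) ⊆ insert a (insert z₀ (lcaClosure T r s)) := by
  set L := {z | ∃ w ∈ s, IsLCA T r z a w}
  have hsub : ∀ z₀, (∀ z ∈ L, z ≠ z₀ → z ∈ lcaClosure T r s) →
      lcaClosure T r (insert a s) ⊆ insert a (insert z₀ (lcaClosure T r s)) := by
    intro z₀ H x ⟨u, hu, w, hw, hx⟩
    have hL : ∀ w ∈ s, IsLCA T r x a w → x ∈ insert a (insert z₀ (lcaClosure T r s)) :=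
      fun w hw hx => .inr (or_iff_not_imp_left.mpr (H x ⟨w, hw, hx⟩))
    rcases hu with rfl | hu <;> rcases hw with rfl | hw
    · exact .inl (hx.eq_of_self hT)
    · exact hL w hw hx
    · exact hL u hu hx.symm
    · exact .inr (.inr ⟨u, hu, w, hw, hx⟩)
  rcases L.eq_empty_or_nonempty with hL | hL
  · exact ⟨a, hsub a (by simp [hL])⟩
  obtain ⟨z₀, ⟨w', hw', hz₀⟩, hmax⟩ := exists_mem_forall_isAncestor (Set.toFinite L) hL
    (fun x ⟨_, _, hx⟩ y ⟨_, _, hy⟩ => hx.1.total hT hy.1)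
  exact ⟨z₀, hsub z₀ fun z ⟨w, hw, hz⟩ hne =>
    ⟨w, hw, w', hw', hz.isLCA_of_isAncestor hT hz₀ (hmax z ⟨w, hw, hz⟩) hne⟩⟩

theorem ncard_lcaClosure_le [Finite α] (hT : T.Preconnected) (r : α) (X : Set α) :
    (lcaClosure T r X).ncard ≤ 2 * X.ncard - 1 := by
  induction X, X.toFinite using Set.Finite.induction_on with
  | empty => simp [lcaClosure]
  | @insert a s ha hs ih =>
    rcases s.eq_empty_or_nonempty with rfl | hne
    · simpa using Set.ncard_le_ncard (lcaClosure_singleton_subset hT a (r := r))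
    obtain ⟨z₀, hz₀⟩ := exists_lcaClosure_insert_subset hT a s (r := r)
    have h₁ := Set.ncard_le_ncard hz₀
    have h₂ := Set.ncard_insert_le a (insert z₀ (lcaClosure T r s))
    have h₃ := Set.ncard_insert_le z₀ (lcaClosure T r s)
    have h₄ := (Set.ncard_pos hs).mpr hne
    rw [Set.ncard_insert_of_notMem ha hs]
    omega

end LCA

section Tree

variable {α : Type*} {T : SimpleGraph α} {r a b g k k' t u w x y z : α}

theorem SimpleGraph.IsAcyclic.isAncestor_iff_mem_support (hT : T.IsAcyclic) {p : T.Walk a b}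
    (hp : p.IsPath) : IsAncestor T a z b ↔ z ∈ p.support := by
  classical
  refine ⟨fun h => h p, fun hz q => ?_⟩
  have hq : (q.toPath : T.Walk a b) = p :=
    congrArg Subtype.val ((hT.subsingleton_path a b).elim q.toPath ⟨p, hp⟩)
  exact q.support_toPath_subset_support (hq ▸ hz)

theorem SimpleGraph.IsAcyclic.isAncestor_or_isAncestor_of_adj (hT : T.IsAcyclic) (hxy : T.Adj x y) :
    IsAncestor T r x y ∨ IsAncestor T r y x := by
  classical
  refine or_iff_not_imp_left.mpr fun h => ?_
  obtain ⟨q, hq⟩ : ∃ q : T.Walk r y, x ∉ q.support := by simpa [IsAncestor] using h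
  have hx : x ∉ (q.toPath : T.Walk r y).support :=
    fun hx => hq (q.support_toPath_subset_support hx)
  rw [hT.isAncestor_iff_mem_support (q.toPath.2.concat hx hxy.symm)]
  simp [Walk.support_concat]

theorem SimpleGraph.IsAcyclic.isAncestor_of_adj_of_adj (hT : T.IsAcyclic) (hkt : T.Adj k t)
    (htk' : T.Adj t k') (hne : k ≠ k') : IsAncestor T k t k' := by
  have hp : (Walk.cons hkt (Walk.cons htk' Walk.nil)).IsPath := by
    simp [hkt.ne, htk'.ne, hne]
  rw [hT.isAncestor_iff_mem_support hp]
  simp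

theorem SimpleGraph.IsTree.isAncestor_of_isLCA (hT : T.IsTree) (h : IsLCA T r g u w) :
    IsAncestor T u g w := by
  classical
  obtain ⟨p, hp, -⟩ := hT.existsUnique_path r u
  obtain ⟨q, hq, -⟩ := hT.existsUnique_path r w
  have hgp : g ∈ p.support := h.1 p
  have hgq : g ∈ q.support := h.2.1 q
  -- a vertex on both paths below `g` is a common ancestor of `u` and `w`, hence above `g`
  have hpath := (hp.dropUntil hgp).reverse.append (hq.dropUntil hgq) fun y hy hy' => by
    rw [Walk.support_reverse, List.mem_reverse] at hy
    have hyu := (hT.isAcyclic.isAncestor_iff_mem_support hp).2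
      (p.support_dropUntil_subset_support hgp hy)
    have hyw := (hT.isAcyclic.isAncestor_iff_mem_support hq).2
      (q.support_dropUntil_subset_support hgq hy')
    exact hp.eq_of_mem_takeUntil_of_mem_dropUntil hgp (h.2.2 y hyu hyw _) hy
  rw [hT.isAcyclic.isAncestor_iff_mem_support hpath]
  simp

end Tree

section Components

variable {V : Type*} {G : SimpleGraph V} {Z K D s : Set V} {r v x y z : V}

theorem IsCompOfDel.mem_of_walk (hK : IsCompOfDel G Z K) (hx : x ∈ K) (q : G.Walk x y)
    (hq : ∀ z ∈ q.support, z ∉ Z) : y ∈ K := by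
  induction q with
  | nil => exact hx
  | cons hadj p ih =>
    exact ih (hK.2.2 _ hx _ hadj (hq _ (by simp))) fun z hz => hq z (by simp [hz])

theorem IsCompOfDel.subset_of_preconnected (hK : IsCompOfDel G Z K)
    (hs : (G.induce s).Preconnected) (hsZ : Disjoint s Z) (hx : x ∈ s) (hxK : x ∈ K) : s ⊆ K :=
  fun y hy => by
    obtain ⟨q, hq⟩ := hs.exists_walk_support_subset hx hy
    exact hK.mem_of_walk hxK q fun z hz => Set.disjoint_left.mp hsZ (hq z hz)

theorem IsCompOfDel.eq_of_mem (hK : IsCompOfDel G Z K) (hD : IsCompOfDel G Z D) (hvK : v ∈ K)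
    (hvD : v ∈ D) : K = D :=
  (hD.subset_of_preconnected hK.2.1.preconnected hK.1 hvK hvD).antisymm
    (hK.subset_of_preconnected hD.2.1.preconnected hD.1 hvD hvK)

theorem exists_isCompOfDel_mem (hv : v ∉ Z) : ∃ K, IsCompOfDel G Z K ∧ v ∈ K := by
  classical
  refine ⟨{x | ∃ q : G.Walk v x, ∀ y ∈ q.support, y ∉ Z}, ⟨?_, ?_, ?_⟩, .nil, by simpa⟩
  · exact Set.disjoint_left.mpr fun x ⟨q, hq⟩ => hq x q.end_mem_support
  · refine G.induce_connected_of_patches v ⟨.nil, by simpa⟩ fun {x} ⟨q, hq⟩ =>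
      ⟨{y | y ∈ q.support}, fun y hy => ⟨q.takeUntil y hy, fun z hz =>
        hq z (q.support_takeUntil_subset_support hy hz)⟩, q.start_mem_support,
        q.end_mem_support, q.connected_induce_support.preconnected _ _⟩
  · rintro x ⟨q, hq⟩ y hxy hy
    exact ⟨q.concat hxy, by simpa [Walk.support_concat, or_imp, forall_and] using ⟨hq, hy⟩⟩

theorem exists_forall_isCompOfDel_eq (Y : Set V) :
    ∃ D₀, ∀ D, IsCompOfDel G Z D → Y.Nonempty → Y ⊆ D → D = D₀ := by
  rcases Y.eq_empty_or_nonempty with rfl | ⟨y, hy⟩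
  · exact ⟨∅, fun D _ h => absurd h Set.not_nonempty_empty⟩
  obtain ⟨D₀, hD₀⟩ := Set.Subsingleton.exists_subset_singleton
    (s := {D | IsCompOfDel G Z D ∧ Y ⊆ D})
    fun D ⟨hD, hYD⟩ D' ⟨hD', hYD'⟩ => hD.eq_of_mem hD' (hYD hy) (hYD' hy)
  exact ⟨D₀, fun D hD _ hYD => hD₀ ⟨hD, hYD⟩⟩

theorem IsCompOfDel.not_isAncestor (hK : IsCompOfDel G Z K) (hx : x ∈ K) (hy : y ∈ K)
    (hz : z ∈ Z) : ¬ IsAncestor G x z y := fun h => by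
  obtain ⟨q, hq⟩ := hK.2.1.preconnected.exists_walk_support_subset hx hy
  exact Set.disjoint_left.mp hK.1 (hq z (h q)) hz

theorem IsCompOfDel.isAncestor_of_isAncestor (hK : IsCompOfDel G Z K) (hx : x ∈ K) (hy : y ∈ K)
    (hz : z ∈ Z) (h : IsAncestor G r z x) : IsAncestor G r z y :=
  (h.isAncestor_or_isAncestor y).resolve_right (hK.not_isAncestor hy hx hz)

end Components

section Boundary

variable {α : Type*} {T : SimpleGraph α} {r : α} {S K : Set α} {k k' t t' : α}

theorem IsAncestor.eq_of_adj_of_adj (hT : T.Preconnected) (hkt : T.Adj k t) (hk't : T.Adj k' t)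
    (h : IsAncestor T r k t) (h' : IsAncestor T r k' t) : k = k' :=
  ((h.eq_or_of_adj hk't).resolve_left hkt.ne).antisymm (hT r k')
    ((h'.eq_or_of_adj hkt).resolve_left hk't.ne)

theorem IsCompOfDel.isAncestor_of_isAncestor_of_adj (hK : IsCompOfDel T S K) (hk : k ∈ K)
    (htk : T.Adj t k) (ht' : t' ∈ S) (hk' : k' ∈ K) (h' : IsAncestor T r t' k') :
    IsAncestor T r t' t :=
  ((hK.isAncestor_of_isAncestor hk' hk ht' h').eq_or_of_adj htk).resolve_left
    fun h => hK.1.ne_of_mem hk ht' h.symm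

theorem IsCompOfDel.eq_of_upper_adj (hT : T.IsTree) (hK : IsCompOfDel T S K) (ht : t ∈ S)
    (hk : k ∈ K) (htk : T.Adj t k) (h : IsAncestor T r t k) (ht' : t' ∈ S) (hk' : k' ∈ K)
    (htk' : T.Adj t' k') (h' : IsAncestor T r t' k') : t = t' ∧ k = k' := by
  obtain rfl : t = t' := (hK.isAncestor_of_isAncestor_of_adj hk' htk' ht hk h).antisymm
    (hT.connected.preconnected r t') (hK.isAncestor_of_isAncestor_of_adj hk htk ht' hk' h')
  exact ⟨rfl, by_contra fun hne =>
    hK.not_isAncestor hk hk' ht (hT.isAcyclic.isAncestor_of_adj_of_adj htk.symm htk' hne)⟩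

theorem IsCompOfDel.eq_of_lower_adj_of_isAncestor (hT : T.Preconnected) (hK : IsCompOfDel T S K)
    (ht : t ∈ S) (hk : k ∈ K) (h : IsAncestor T r k t) (hk' : k' ∈ K) (hkt' : T.Adj k' t')
    (htt' : IsAncestor T r t t') : t = t' :=
  (htt'.eq_or_of_adj hkt').resolve_right fun htk' => hK.1.ne_of_mem hk ht
    (h.antisymm (hT r t) (hK.isAncestor_of_isAncestor hk' hk ht htk'))

theorem IsCompOfDel.eq_of_lower_adj (hT : T.IsTree)
    (hS : IsLCAClosed T r S) (hK : IsCompOfDel T S K) (ht : t ∈ S) (hk : k ∈ K)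
    (hkt : T.Adj k t) (h : IsAncestor T r k t) (ht' : t' ∈ S) (hk' : k' ∈ K)
    (hkt' : T.Adj k' t') (h' : IsAncestor T r k' t') : t = t' ∧ k = k' := by
  have hpre := hT.connected.preconnected
  obtain ⟨g, hg⟩ := exists_isLCA hpre r t t'
  have hgS : g ∈ S := hS t ht t' ht' g hg
  -- `g` lies on the `t`–`t'` path, which runs through `K` except at its ends
  have hg' : g = t ∨ g = t' := by
    rcases (hT.isAncestor_of_isLCA hg).isAncestor_or_isAncestor k with h₁ | h₁
    · exact (h₁.eq_or_eq_of_adj hkt.symm).imp_right fun hgk => absurd hgk.symm (hK.1.ne_of_mem hk hgS)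
    rcases h₁.isAncestor_or_isAncestor k' with h₂ | h₂
    · exact absurd h₂ (hK.not_isAncestor hk hk' hgS)
    · exact (h₂.eq_or_eq_of_adj hkt').imp_left fun hgk => absurd hgk.symm (hK.1.ne_of_mem hk' hgS)
  obtain rfl : t = t' := by
    rcases hg' with rfl | rfl
    · exact hK.eq_of_lower_adj_of_isAncestor hpre ht hk h hk' hkt' hg.2.1
    · exact (hK.eq_of_lower_adj_of_isAncestor hpre ht' hk' h' hk hkt hg.1).symm
  exact ⟨rfl, IsAncestor.eq_of_adj_of_adj hpre hkt hkt' h h'⟩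

theorem IsCompOfDel.exists_pair_forall_adj (hT : T.IsTree) (hS : IsLCAClosed T r S)
    (hK : IsCompOfDel T S K) :
    ∃ e₁ e₂ : α × α, ∀ t ∈ S, ∀ k ∈ K, T.Adj t k → (t, k) = e₁ ∨ (t, k) = e₂ := by
  have : Nonempty α := ⟨r⟩
  obtain ⟨e₁, he₁⟩ := Set.Subsingleton.exists_subset_singleton
    (s := {e : α × α | e.1 ∈ S ∧ e.2 ∈ K ∧ T.Adj e.1 e.2 ∧ IsAncestor T r e.1 e.2})
    fun ⟨_, _⟩ ⟨ht, hk, htk, h⟩ ⟨_, _⟩ ⟨ht', hk', htk', h'⟩ => by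
      obtain ⟨rfl, rfl⟩ := hK.eq_of_upper_adj hT ht hk htk h ht' hk' htk' h'
      rfl
  obtain ⟨e₂, he₂⟩ := Set.Subsingleton.exists_subset_singleton
    (s := {e : α × α | e.1 ∈ S ∧ e.2 ∈ K ∧ T.Adj e.1 e.2 ∧ IsAncestor T r e.2 e.1})
    fun ⟨_, _⟩ ⟨ht, hk, htk, h⟩ ⟨_, _⟩ ⟨ht', hk', htk', h'⟩ => by
      obtain ⟨rfl, rfl⟩ := hK.eq_of_lower_adj hT hS ht hk htk.symm h ht'
        hk' htk'.symm h'
      rfl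
  refine ⟨e₁, e₂, fun t ht k hk htk => ?_⟩
  rcases hT.isAcyclic.isAncestor_or_isAncestor_of_adj htk (r := r) with h | h
  exacts [.inl (he₁ ⟨ht, hk, htk, h⟩), .inr (he₂ ⟨ht, hk, htk, h⟩)]

end Boundary

section TreeDecomp

variable {V ι : Type*} {G : SimpleGraph V} {T : SimpleGraph ι} {W : ι → Set V} {r : ι}
  {S K : Set ι} {C : Set V} {t k : ι} {w : V}

theorem IsTreeDecomp.exists_isCompOfDel_bags (hTD : IsTreeDecomp G T W)
    (hC : (G.induce C).Connected) (hCS : Disjoint C (⋃ x ∈ S, W x)) :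
    ∃ K, IsCompOfDel T S K ∧ ∀ u ∈ C, ∀ t, u ∈ W t → t ∈ K := by
  have hbags : ∀ u ∈ C, Disjoint {t | u ∈ W t} S := fun u hu =>
    Set.disjoint_left.mpr fun t ht htS => Set.disjoint_left.mp hCS hu (Set.mem_biUnion htS ht)
  obtain ⟨⟨u₀, hu₀⟩⟩ := hC.nonempty
  obtain ⟨⟨t₀, ht₀⟩⟩ := (hTD.bagsConnected u₀).nonempty
  obtain ⟨K, hK, ht₀K⟩ := exists_isCompOfDel_mem (Set.disjoint_left.mp (hbags u₀ hu₀) ht₀)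
  have hstep : ∀ u ∈ C, ∀ t, u ∈ W t → t ∈ K → {t | u ∈ W t} ⊆ K := fun u hu t ht htK =>
    hK.subset_of_preconnected (hTD.bagsConnected u).preconnected (hbags u hu) ht htK
  have hwalk : ∀ {a b} (q : G.Walk a b), (∀ x ∈ q.support, x ∈ C) →
      {t | a ∈ W t} ⊆ K → {t | b ∈ W t} ⊆ K := by
    intro a b q
    induction q with
    | nil => exact fun _ h => h
    | cons hadj p ih =>
      intro hq ha
      obtain ⟨x, hax, hbx⟩ := hTD.edgeInBag hadj
      exact ih (fun z hz => hq z (by simp [hz])) (hstep _ (hq _ (by simp)) x hbx (ha hax))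
  refine ⟨K, hK, fun u hu t ht => ?_⟩
  obtain ⟨q, hq⟩ := hC.preconnected.exists_walk_support_subset hu₀ hu
  exact hwalk q hq (hstep u₀ hu₀ t₀ ht₀ ht₀K) ht

theorem IsTreeDecomp.exists_adj_of_mem_nbhdSet (hTD : IsTreeDecomp G T W)
    (hK : IsCompOfDel T S K) (hC : IsCompOfDel G (⋃ x ∈ S, W x) C)
    (hCK : ∀ u ∈ C, ∀ t, u ∈ W t → t ∈ K) (hw : w ∈ nbhdSet G C) :
    ∃ t k, t ∈ S ∧ k ∈ K ∧ T.Adj t k ∧ w ∈ W t := by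
  obtain ⟨hwC, u, huC, huw⟩ := hw
  obtain ⟨s₀, hs₀, hws₀⟩ : ∃ s₀ ∈ S, w ∈ W s₀ := by
    by_contra! h
    exact hwC (hC.2.2 u huC w huw (by simpa using h))
  obtain ⟨t₀, hut₀, hwt₀⟩ := hTD.edgeInBag huw
  obtain ⟨q, hq⟩ := (hTD.bagsConnected w).preconnected.exists_walk_support_subset hwt₀ hws₀
  obtain ⟨d, hd, hdK, hdK'⟩ :=
    q.exists_boundary_dart K (hCK u huC t₀ hut₀) (Set.disjoint_right.mp hK.1 hs₀)
  refine ⟨d.snd, d.fst, ?_, hdK, d.adj.symm, hq _ (q.dart_snd_mem_support_of_mem_darts hd)⟩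
  by_contra h
  exact hdK' (hK.2.2 _ hdK _ d.adj h)

theorem disjoint_biUnion_sideVerts (hK : IsCompOfDel T S K) (hCK : ∀ u ∈ C, ∀ t, u ∈ W t → t ∈ K)
    (ht : t ∈ S) (hk : k ∈ K) : Disjoint (⋃ z ∈ sideVerts T t k, W z) C := by
  refine Set.disjoint_left.mpr fun v hv hvC => ?_
  obtain ⟨z, hz, hvz⟩ := Set.mem_iUnion₂.mp hv
  -- `z ∈ sideVerts T t k` unfolds to `IsAncestor T z t k`
  exact hK.not_isAncestor (hCK v hvC z hvz) hk ht hz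

theorem IsTreeDecomp.exists_pair_cover_nbhdSet (hTD : IsTreeDecomp G T W)
    (hS : IsLCAClosed T r S) (hC : IsCompOfDel G (⋃ x ∈ S, W x) C) :
    ∃ e₁ e₂ : ι × ι, ∀ w ∈ nbhdSet G C, ∃ e ∈ ({e₁, e₂} : Set (ι × ι)),
      T.Adj e.1 e.2 ∧ w ∈ W e.1 ∧ Disjoint (⋃ z ∈ sideVerts T e.1 e.2, W z) C := by
  obtain ⟨K, hK, hCK⟩ := hTD.exists_isCompOfDel_bags hC.2.1 hC.1
  obtain ⟨e₁, e₂, he⟩ := hK.exists_pair_forall_adj hTD.isTree hS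
  refine ⟨e₁, e₂, fun w hw => ?_⟩
  obtain ⟨t, k, ht, hk, htk, hwt⟩ := hTD.exists_adj_of_mem_nbhdSet hK hC hCK hw
  exact ⟨(t, k), he t ht k hk htk, htk, hwt, disjoint_biUnion_sideVerts hK hCK ht hk⟩

end TreeDecomp

theorem lca_closure_bags_general {V : Type} {ι : Type} [Fintype ι]
    (m : ℕ) (G : SimpleGraph V) (T : SimpleGraph ι) (W : ι → Set V)
    (hTD : IsTreeDecomp G T W) (r : ι) (X : Set ι) (hX : X.ncard = m) :
    (∃ s : Set ι, s.ncard ≤ 2 * m - 1 ∧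
        (⋃ x ∈ lcaClosure T r X, W x) = ⋃ x ∈ s, W x) ∧
      (∀ C : Set V, IsCompOfDel G (⋃ x ∈ lcaClosure T r X, W x) C →
        ∃ x y : ι, nbhdSet G C ⊆ W x ∪ W y) ∧
      (IsNaturalTD G T W →
        ∀ C : Set V, IsCompOfDel G (⋃ x ∈ lcaClosure T r X, W x) C →
          ∃ D₁ D₂ : Set V, ∀ D : Set V, IsCompOfDel G C D →
            (nbhdSet G C ∩ D).Nonempty → D = D₁ ∨ D = D₂) := by
  have hT := hTD.isTree.connected.preconnected
  have hS := isLCAClosed_lcaClosure hT X (r := r)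
  refine ⟨⟨_, hX ▸ ncard_lcaClosure_le hT r X, rfl⟩, fun C hC => ?_, fun hnat C hC => ?_⟩
  · obtain ⟨e₁, e₂, he⟩ := hTD.exists_pair_cover_nbhdSet hS hC
    refine ⟨e₁.1, e₂.1, fun w hw => ?_⟩
    obtain ⟨e, rfl | rfl, -, hwe, -⟩ := he w hw
    exacts [.inl hwe, .inr hwe]
  obtain ⟨e₁, e₂, he⟩ := hTD.exists_pair_cover_nbhdSet hS hC
  obtain ⟨D₁, hD₁⟩ := exists_forall_isCompOfDel_eq (G := G) (Z := C)
    (⋃ z ∈ sideVerts T e₁.1 e₁.2, W z)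
  obtain ⟨D₂, hD₂⟩ := exists_forall_isCompOfDel_eq (G := G) (Z := C)
    (⋃ z ∈ sideVerts T e₂.1 e₂.2, W z)
  refine ⟨D₁, D₂, fun D hD ⟨w, hwN, hwD⟩ => ?_⟩
  obtain ⟨e, he₁₂, hadj, hwe, hdisj⟩ := he w hwN
  have hwY : w ∈ ⋃ z ∈ sideVerts T e.1 e.2, W z :=
    Set.mem_biUnion (fun q => q.start_mem_support) hwe
  have hYD := hD.subset_of_preconnected (hnat _ _ hadj).preconnected hdisj hwY hwD
  rcases he₁₂ with rfl | rfl
  exacts [.inl (hD₁ D hD ⟨w, hwY⟩ hYD), .inr (hD₂ D hD ⟨w, hwY⟩ hYD)]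

/-- the union `Z` of the bags indexed by the LCA closure of a set `X` of `m`
tree vertices is a union of at most `2m-1` bags, every component of `G - Z` has its
neighborhood inside the union of at most two bags, and if the decomposition is natural,
the neighborhood of such a component `C` meets at most two components of `G - V(C)`. -/
theorem lca_closure_bags {V : Type} [Fintype V] {ι : Type} [Fintype ι]
    (m : ℕ) (hm : 0 < m) (G : SimpleGraph V) (T : SimpleGraph ι) (W : ι → Set V)
    (hTD : IsTreeDecomp G T W) (r : ι) (X : Set ι) (hX : X.ncard = m) :
    (∃ s : Set ι, s.ncard ≤ 2 * m - 1 ∧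
        (⋃ x ∈ lcaClosure T r X, W x) = ⋃ x ∈ s, W x) ∧
      (∀ C : Set V, IsCompOfDel G (⋃ x ∈ lcaClosure T r X, W x) C →
        ∃ x y : ι, nbhdSet G C ⊆ W x ∪ W y) ∧
      (IsNaturalTD G T W →
        ∀ C : Set V, IsCompOfDel G (⋃ x ∈ lcaClosure T r X, W x) C →
          ∃ D₁ D₂ : Set V, ∀ D : Set V, IsCompOfDel G C D →
            (nbhdSet G C ∩ D).Nonempty → D = D₁ ∨ D = D₂) :=
  lca_closure_bags_general m G T W hTD r X hX
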